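/- arXiv:1710.02396 — 2 statements merged into one kernel-verified Lean document; each statement's English description precedes it below -/
import Mathlib

section
/- Let B̂ₖ = B̂₀ − [B̂₀S Y] K⁻¹ [B̂₀S Y]ᵀ with B̂₀ = γP∥P∥ᵀ + γ⊥P⊥P⊥ᵀ, and Bₖ = γI − [γS Y] K⁻¹ [γS Y]ᵀ where K is the same invertible block matrix in both (valid since B̂₀S = γS when Range(S) ⊆ Range(P∥) and Range(Y) ⊆ Range(P∥)). Then B̂ₖ and Bₖ have the same action on Range(P∥), and B̂ₖ − Bₖ = (γ⊥ − γ)P⊥P⊥ᵀ. -/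
/-!
Since `S = P∥C`, the columns of `S` are eigenvectors of `B̂₀` for `γ`, so `B̂₀S = γS` and the two
updates subtract the same low-rank term. Hence `B̂ₖ − Bₖ = B̂₀ − γI`, which is `(γ⊥ − γ)P⊥P⊥ᵀ`
because `P∥P∥ᵀ + P⊥P⊥ᵀ = I`, and this annihilates `Range(P∥)` because `P⊥ᵀP∥ = 0`.
-/

open Matrix

section Projections

variable {R n r s m : Type*} [CommRing R]

theorem Matrix.smul_add_smul_sub_smul_one [Fintype r] [Fintype s] [DecidableEq n]
    {P : Matrix n r R} {Q : Matrix n s R} (hcomplete : P * Pᵀ + Q * Qᵀ = 1) (γ δ : R) :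
    γ • (P * Pᵀ) + δ • (Q * Qᵀ) - γ • (1 : Matrix n n R) = (δ - γ) • (Q * Qᵀ) := by
  rw [← hcomplete]
  module

theorem Matrix.mul_transpose_mul_self_of_transpose_mul_self [Fintype n] [Fintype r]
    [DecidableEq r] {P : Matrix n r R} (hP : Pᵀ * P = 1) : P * Pᵀ * P = P := by
  rw [Matrix.mul_assoc, hP, Matrix.mul_one]

theorem Matrix.mul_transpose_mul_of_transpose_mul_eq_zero [Fintype n] [Fintype s]
    {P : Matrix n r R} {Q : Matrix n s R} (horth : Pᵀ * Q = 0) : Q * Qᵀ * P = 0 := by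
  have hQP : Qᵀ * P = 0 := by simpa using congrArg transpose horth
  rw [Matrix.mul_assoc, hQP, Matrix.mul_zero]

theorem Matrix.smul_add_smul_mul_of_range [Fintype n] [Fintype r] [Fintype s]
    [DecidableEq r] {P : Matrix n r R} {Q : Matrix n s R} (hP : Pᵀ * P = 1)
    (horth : Pᵀ * Q = 0) (γ δ : R) (C : Matrix r m R) :
    (γ • (P * Pᵀ) + δ • (Q * Qᵀ)) * (P * C) = γ • (P * C) := by
  rw [Matrix.add_mul, Matrix.smul_mul, Matrix.smul_mul, ← Matrix.mul_assoc,
    ← Matrix.mul_assoc, mul_transpose_mul_self_of_transpose_mul_self hP,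
    mul_transpose_mul_of_transpose_mul_eq_zero horth, Matrix.zero_mul, smul_zero, add_zero]

end Projections

theorem dense_vs_diagonal_update_general
    (n r m : ℕ) (γ γperp : ℝ)
    (Ppar : Matrix (Fin n) (Fin r) ℝ) (Pperp : Matrix (Fin n) (Fin (n - r)) ℝ)
    (hpar : Pparᵀ * Ppar = 1)
    (horth : Pparᵀ * Pperp = 0)
    (hcomplete : Ppar * Pparᵀ + Pperp * Pperpᵀ = 1)
    (S Y : Matrix (Fin n) (Fin m) ℝ)
    (hS : ∃ C : Matrix (Fin r) (Fin m) ℝ, S = Ppar * C)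
    (K : Matrix (Fin m ⊕ Fin m) (Fin m ⊕ Fin m) ℝ)
    (B0hat Bkhat Bk : Matrix (Fin n) (Fin n) ℝ)
    (hB0hat : B0hat = γ • (Ppar * Pparᵀ) + γperp • (Pperp * Pperpᵀ))
    (hBkhat : Bkhat = B0hat
        - Matrix.fromCols (B0hat * S) Y * K⁻¹ * (Matrix.fromCols (B0hat * S) Y)ᵀ)
    (hBk : Bk = γ • (1 : Matrix (Fin n) (Fin n) ℝ)
        - Matrix.fromCols (γ • S) Y * K⁻¹ * (Matrix.fromCols (γ • S) Y)ᵀ) :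
    (∀ c : Fin r → ℝ, Bkhat *ᵥ (Ppar *ᵥ c) = Bk *ᵥ (Ppar *ᵥ c)) ∧
      Bkhat - Bk = (γperp - γ) • (Pperp * Pperpᵀ) := by
  obtain ⟨C, rfl⟩ := hS
  have hB0S : B0hat * (Ppar * C) = γ • (Ppar * C) := by
    rw [hB0hat, smul_add_smul_mul_of_range hpar horth]
  have hdiff : Bkhat - Bk = (γperp - γ) • (Pperp * Pperpᵀ) := by
    rw [hBkhat, hBk, hB0S, sub_sub_sub_cancel_right, hB0hat,
      smul_add_smul_sub_smul_one hcomplete]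
  refine ⟨fun c => ?_, hdiff⟩
  rw [← sub_eq_zero, ← sub_mulVec, hdiff, smul_mulVec, mulVec_mulVec,
    mul_transpose_mul_of_transpose_mul_eq_zero horth, zero_mulVec, smul_zero]

/-- With `B̂₀ = γP∥P∥ᵀ + γ⊥P⊥P⊥ᵀ`, `B̂ₖ = B̂₀ − [B̂₀S Y]K⁻¹[B̂₀S Y]ᵀ` and
`Bₖ = γI − [γS Y]K⁻¹[γS Y]ᵀ` (same invertible `K`), where the columns of `S`
and `Y` lie in `Range(P∥)`: `B̂ₖ` and `Bₖ` agree on `Range(P∥)`, and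
`B̂ₖ − Bₖ = (γ⊥ − γ)P⊥P⊥ᵀ`. -/
theorem dense_vs_diagonal_update
    (n r m : ℕ) (γ γperp : ℝ)
    (Ppar : Matrix (Fin n) (Fin r) ℝ) (Pperp : Matrix (Fin n) (Fin (n - r)) ℝ)
    (hpar : Pparᵀ * Ppar = 1) (hperp : Pperpᵀ * Pperp = 1)
    (horth : Pparᵀ * Pperp = 0)
    (hcomplete : Ppar * Pparᵀ + Pperp * Pperpᵀ = 1)
    (S Y : Matrix (Fin n) (Fin m) ℝ)
    (hS : ∃ C : Matrix (Fin r) (Fin m) ℝ, S = Ppar * C)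
    (hY : ∃ C : Matrix (Fin r) (Fin m) ℝ, Y = Ppar * C)
    (K : Matrix (Fin m ⊕ Fin m) (Fin m ⊕ Fin m) ℝ) (hK : IsUnit K.det)
    (B0hat Bkhat Bk : Matrix (Fin n) (Fin n) ℝ)
    (hB0hat : B0hat = γ • (Ppar * Pparᵀ) + γperp • (Pperp * Pperpᵀ))
    (hBkhat : Bkhat = B0hat
        - Matrix.fromCols (B0hat * S) Y * K⁻¹ * (Matrix.fromCols (B0hat * S) Y)ᵀ)
    (hBk : Bk = γ • (1 : Matrix (Fin n) (Fin n) ℝ)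
        - Matrix.fromCols (γ • S) Y * K⁻¹ * (Matrix.fromCols (γ • S) Y)ᵀ) :
    (∀ c : Fin r → ℝ, Bkhat *ᵥ (Ppar *ᵥ c) = Bk *ᵥ (Ppar *ᵥ c)) ∧
      Bkhat - Bk = (γperp - γ) • (Pperp * Pperpᵀ) :=
  dense_vs_diagonal_update_general n r m γ γperp Ppar Pperp hpar horth hcomplete S Y hS K B0hat
    Bkhat Bk hB0hat hBkhat hBk
end

section
/- For the shape-changing norm ‖p‖_{P,∞} := max(‖P∥ᵀp‖_∞, ‖P⊥ᵀp‖₂), every p ∈ ℝⁿ satisfies ‖p‖_{P,∞} ≤ ‖p‖₂ ≤ √(r+1)·‖p‖_{P,∞}. -/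
/-! Since `P∥ P∥ᵀ + P⊥ P⊥ᵀ = 1`, Pythagoras gives `‖p‖₂² = ‖P∥ᵀp‖₂² + ‖P⊥ᵀp‖₂²`; both bounds then
follow from `‖x‖_∞ ≤ ‖x‖₂ ≤ √r ‖x‖_∞` for `x = P∥ᵀp ∈ ℝʳ`. -/

open Matrix

namespace Matrix

variable {R m k l : Type*} [CommRing R] [Fintype m] [Fintype k] [Fintype l]

theorem sum_sq_mulVec_transpose (A : Matrix m k R) (p : m → R) :
    ∑ i, (Aᵀ *ᵥ p) i ^ 2 = p ⬝ᵥ ((A * Aᵀ) *ᵥ p) := by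
  rw [← mulVec_mulVec, dotProduct_mulVec, ← mulVec_transpose]
  simp only [sq, dotProduct]

theorem sum_sq_eq_add_of_mul_transpose_add_mul_transpose_eq_one [DecidableEq m]
    (A : Matrix m k R) (B : Matrix m l R) (h : A * Aᵀ + B * Bᵀ = 1) (p : m → R) :
    ∑ i, p i ^ 2 = ∑ i, (Aᵀ *ᵥ p) i ^ 2 + ∑ j, (Bᵀ *ᵥ p) j ^ 2 := by
  rw [sum_sq_mulVec_transpose, sum_sq_mulVec_transpose, ← dotProduct_add, ← add_mulVec, h,
    one_mulVec]
  simp only [sq, dotProduct]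

end Matrix

section SupNorm

variable {ι : Type*} [Fintype ι]

theorem Real.iSup_abs_le_sqrt_sum_sq (x : ι → ℝ) : ⨆ i, |x i| ≤ √(∑ i, x i ^ 2) :=
  Real.iSup_le (fun i => Real.abs_le_sqrt <|
    Finset.single_le_sum (fun j _ => sq_nonneg (x j)) (Finset.mem_univ i)) (Real.sqrt_nonneg _)

theorem Real.sum_sq_le_card_mul_iSup_abs_sq (x : ι → ℝ) :
    ∑ i, x i ^ 2 ≤ Fintype.card ι * (⨆ i, |x i|) ^ 2 := by
  have hbdd : BddAbove (Set.range fun i => |x i|) := (Set.finite_range _).bddAbove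
  calc ∑ i, x i ^ 2 ≤ ∑ _i : ι, (⨆ i, |x i|) ^ 2 := Finset.sum_le_sum fun i _ => by
        rw [← sq_abs]
        exact pow_le_pow_left₀ (abs_nonneg _) (le_ciSup hbdd i) 2
    _ = Fintype.card ι * (⨆ i, |x i|) ^ 2 := by
        rw [Finset.sum_const, Finset.card_univ, nsmul_eq_mul]

end SupNorm

theorem Real.sqrt_add_le_sqrt_add_one_mul_max_sqrt {a b k u : ℝ} (hk : 0 ≤ k) (hu : 0 ≤ u)
    (hb : 0 ≤ b) (ha : a ≤ k * u ^ 2) : √(a + b) ≤ √(k + 1) * max u √b := by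
  have hmax : 0 ≤ max u √b := le_max_of_le_left hu
  rw [← Real.sqrt_sq hmax, ← Real.sqrt_mul (by positivity)]
  apply Real.sqrt_le_sqrt
  have hu' : u ^ 2 ≤ max u √b ^ 2 := pow_le_pow_left₀ hu (le_max_left u √b) 2
  have hb' : b ≤ max u √b ^ 2 :=
    (Real.sq_sqrt hb).symm.le.trans (pow_le_pow_left₀ (Real.sqrt_nonneg b) (le_max_right u √b) 2)
  nlinarith

theorem shape_changing_norm_equivalence_general
    (n r : ℕ)
    (Ppar : Matrix (Fin n) (Fin r) ℝ) (Pperp : Matrix (Fin n) (Fin (n - r)) ℝ)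
    (hcomplete : Ppar * Pparᵀ + Pperp * Pperpᵀ = 1)
    (p : Fin n → ℝ) :
    max (⨆ i : Fin r, |(Pparᵀ *ᵥ p) i|) (Real.sqrt (∑ j, ((Pperpᵀ *ᵥ p) j)^2))
        ≤ Real.sqrt (∑ i, (p i)^2) ∧
    Real.sqrt (∑ i, (p i)^2)
        ≤ Real.sqrt (r + 1) *
          max (⨆ i : Fin r, |(Pparᵀ *ᵥ p) i|) (Real.sqrt (∑ j, ((Pperpᵀ *ᵥ p) j)^2)) := by
  set x := Pparᵀ *ᵥ p
  set y := Pperpᵀ *ᵥ p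
  have hx : 0 ≤ ∑ i, x i ^ 2 := Finset.sum_nonneg fun i _ => sq_nonneg (x i)
  have hy : 0 ≤ ∑ j, y j ^ 2 := Finset.sum_nonneg fun j _ => sq_nonneg (y j)
  rw [sum_sq_eq_add_of_mul_transpose_add_mul_transpose_eq_one Ppar Pperp hcomplete p]
  refine ⟨max_le ?_ ?_, ?_⟩
  · exact (Real.iSup_abs_le_sqrt_sum_sq x).trans (Real.sqrt_le_sqrt (le_add_of_nonneg_right hy))
  · exact Real.sqrt_le_sqrt (le_add_of_nonneg_left hx)
  · refine Real.sqrt_add_le_sqrt_add_one_mul_max_sqrt r.cast_nonneg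
      (Real.iSup_nonneg fun i => abs_nonneg (x i)) hy ?_
    simpa only [Fintype.card_fin] using Real.sum_sq_le_card_mul_iSup_abs_sq x

/-- Norm equivalence for the shape-changing norm
`‖p‖_{P,∞} = max(‖P∥ᵀp‖_∞, ‖P⊥ᵀp‖₂)`:
`‖p‖_{P,∞} ≤ ‖p‖₂ ≤ √(r+1)·‖p‖_{P,∞}`. -/
theorem shape_changing_norm_equivalence
    (n r : ℕ)
    (Ppar : Matrix (Fin n) (Fin r) ℝ) (Pperp : Matrix (Fin n) (Fin (n - r)) ℝ)
    (hpar : Pparᵀ * Ppar = 1) (hperp : Pperpᵀ * Pperp = 1)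
    (horth : Pparᵀ * Pperp = 0)
    (hcomplete : Ppar * Pparᵀ + Pperp * Pperpᵀ = 1)
    (p : Fin n → ℝ) :
    max (⨆ i : Fin r, |(Pparᵀ *ᵥ p) i|) (Real.sqrt (∑ j, ((Pperpᵀ *ᵥ p) j)^2))
        ≤ Real.sqrt (∑ i, (p i)^2) ∧
    Real.sqrt (∑ i, (p i)^2)
        ≤ Real.sqrt (r + 1) *
          max (⨆ i : Fin r, |(Pparᵀ *ᵥ p) i|) (Real.sqrt (∑ j, ((Pperpᵀ *ᵥ p) j)^2)) :=
  shape_changing_norm_equivalence_general n r Ppar Pperp hcomplete p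
end
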